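/- arXiv:2011.03205 — 3 statements merged into one kernel-verified Lean document; each statement's English description precedes it below -/
import Mathlib

section
/- Let G be a graph with vertices a ≠ b, and let A ⊆ V(G)−{a}, B ⊆ V(G)−{b}. If b ∈ A and a ∉ B, then ρ_{G∖b}(A∩B) + ρ_{G∖a}(A∪B) ≤ ρ_{G∖a}(A) + ρ_{G∖b}(B). -/
open Finset

variable {V : Type} [Fintype V] [DecidableEq V]

open scoped Classical

/-- The rank over GF(2) of the `X × Y` submatrix of the adjacency matrix of `G`. -/
noncomputable def cutRankOn (G : SimpleGraph V) (X Y : Finset V) : ℕ :=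
  (Matrix.of (fun (i : ↥X) (j : ↥Y) => if G.Adj i.1 j.1 then (1 : ZMod 2) else 0)).rank

/-- The cut-rank of `X` in the graph `G` restricted to the vertex set `S`:
the rank over GF(2) of the `X × (S \ X)` submatrix of the adjacency matrix. -/
noncomputable def cutRank (G : SimpleGraph V) (S X : Finset V) : ℕ :=
  cutRankOn G X (S \ X)

/-- `A` gives a split of the graph `G` restricted to the vertex set `S`. -/
def IsSplit (G : SimpleGraph V) (S A : Finset V) : Prop :=
  A ⊆ S ∧ cutRank G S A ≤ 1 ∧ 2 ≤ A.card ∧ 2 ≤ (S \ A).card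

/-- The graph `G` restricted to the vertex set `S` is prime: connected and with no split. -/
def IsPrime (G : SimpleGraph V) (S : Finset V) : Prop :=
  (G.induce (↑S : Set V)).Connected ∧ ∀ A, ¬ IsSplit G S A

/-- `G` restricted to `S` is `k⁺ˡ`-rank-connected. -/
def RankConn (G : SimpleGraph V) (S : Finset V) (k l : ℤ) : Prop :=
  ∀ X ⊆ S, (cutRank G S X : ℤ) < k →
    min (X.card : ℤ) (((S \ X).card : ℤ)) < k + l

/-- `G` restricted to `S` is `k`-rank-connected. -/
def RankConnAll (G : SimpleGraph V) (S : Finset V) (k : ℤ) : Prop :=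
  ∀ m : ℤ, m ≤ k → RankConn G S m 0

def SideA (G : SimpleGraph V) (v w x : V) : Prop := G.Adj v x ∧ ¬ G.Adj w x ∧ x ≠ w
def SideB (G : SimpleGraph V) (v w x : V) : Prop := G.Adj w x ∧ ¬ G.Adj v x ∧ x ≠ v
def SideC (G : SimpleGraph V) (v w x : V) : Prop := G.Adj v x ∧ G.Adj w x

/-- `x` and `y` lie in different ones among the three sets
`N(v)−N(w)−{w}`, `N(w)−N(v)−{v}`, `N(v)∩N(w)`. -/
def PivotToggle (G : SimpleGraph V) (v w x y : V) : Prop :=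
  (SideA G v w x ∧ SideB G v w y) ∨ (SideB G v w x ∧ SideA G v w y) ∨
  (SideA G v w x ∧ SideC G v w y) ∨ (SideC G v w x ∧ SideA G v w y) ∨
  (SideB G v w x ∧ SideC G v w y) ∨ (SideC G v w x ∧ SideB G v w y)

set_option linter.unusedSectionVars false in
lemma pivotToggle_symm {G : SimpleGraph V} {v w x y : V}
    (h : PivotToggle G v w x y) : PivotToggle G v w y x := by
  unfold PivotToggle at h ⊢; tauto

/-- The graph `G ∧ vw` obtained by pivoting the edge `vw`: toggle adjacency across the
three sets and swap the labels of `v` and `w`. -/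
def pivot (G : SimpleGraph V) (v w : V) : SimpleGraph V where
  Adj a b := a ≠ b ∧
    Xor' (G.Adj (Equiv.swap v w a) (Equiv.swap v w b))
         (PivotToggle G v w (Equiv.swap v w a) (Equiv.swap v w b))
  symm := by
    constructor
    intro a b h
    obtain ⟨hne, hx⟩ := h
    refine ⟨hne.symm, ?_⟩
    have hA : G.Adj (Equiv.swap v w b) (Equiv.swap v w a) ↔
        G.Adj (Equiv.swap v w a) (Equiv.swap v w b) := SimpleGraph.adj_comm _ _ _
    have hT : PivotToggle G v w (Equiv.swap v w b) (Equiv.swap v w a) ↔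
        PivotToggle G v w (Equiv.swap v w a) (Equiv.swap v w b) :=
      ⟨pivotToggle_symm, pivotToggle_symm⟩
    rw [hA, hT]
    exact hx
  loopless := by constructor; intro a h; exact h.1 rfl

/-- One pivot step along an edge. -/
def PivotStep (G H : SimpleGraph V) : Prop := ∃ v w, G.Adj v w ∧ H = pivot G v w

/-- Pivot-equivalence: a sequence of pivots. -/
def PivotEquiv : SimpleGraph V → SimpleGraph V → Prop := Relation.ReflTransGen PivotStep

/-- `A` is a fully closed set of `G` restricted to `S`. -/
def FullyClosed (G : SimpleGraph V) (S A : Finset V) : Prop :=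
  A ⊆ S ∧ cutRank G S A = 2 ∧ 2 < A.card ∧
    ∀ u ∈ S, u ∉ A → cutRank G S A < cutRank G S (insert u A)

/-- `{a,b,c}` is a triplet of `G` (on vertex set `univ`). -/
def Triplet (G : SimpleGraph V) (a b c : V) : Prop :=
  cutRank G Finset.univ {a, b, c} = 2 ∧
  ∀ x ∈ ({a, b, c} : Finset V),
    cutRank G (Finset.univ \ {x}) (({a, b, c} : Finset V) \ {x}) = 2

/-- `B` is a `k`-branched set of `G` restricted to `S`. -/
inductive KBranched (G : SimpleGraph V) (S : Finset V) (k : ℕ) : Finset V → Prop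
  | single (v : V) (hv : v ∈ S) (h : cutRank G S {v} ≤ k) : KBranched G S k {v}
  | split (B B' : Finset V) (hB : B ⊆ S) (h : cutRank G S B ≤ k)
      (h1 : B' ⊆ B) (h2 : B'.Nonempty) (h3 : B' ≠ B)
      (hb1 : KBranched G S k B') (hb2 : KBranched G S k (B \ B')) : KBranched G S k B

/-- The rank-width of `G` restricted to `S`: the least `k` such that `S` is `k`-branched
(equivalently, the minimum width of a rank-decomposition). -/
noncomputable def rankWidth (G : SimpleGraph V) (S : Finset V) : ℕ :=
  sInf {k | S = ∅ ∨ KBranched G S k S}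

/-- `A` is a titanic set of `G` restricted to `S`. -/
def Titanic (G : SimpleGraph V) (S A : Finset V) : Prop :=
  ∀ A1 A2 A3 : Finset V, A1 ∪ A2 ∪ A3 = A →
    Disjoint A1 A2 → Disjoint A1 A3 → Disjoint A2 A3 →
    cutRank G S A ≤ cutRank G S A1 ∨ cutRank G S A ≤ cutRank G S A2 ∨
      cutRank G S A ≤ cutRank G S A3

/-!
Cut-rank is the rank of a submatrix of the adjacency matrix over GF(2), and submatrix rank is
bimodular: `r(X₁ ∩ X₂, Y₁ ∪ Y₂) + r(X₁ ∪ X₂, Y₁ ∩ Y₂) ≤ r(X₁, Y₁) + r(X₂, Y₂)`. Indeed `r(X, Y)`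
is the dimension of the restriction to the rows `X` of the span of the columns `Y`, and the
inequality follows from rank–nullity and the modularity of dimension. Because `b ∈ A` and
`a ∉ B`, the column sets `V - b - (A ∩ B)` and `V - a - (A ∪ B)` are exactly the union and the
intersection of `V - a - A` and `V - b - B`.
-/

open Module Submodule

section
variable {K E F : Type*} [DivisionRing K] [AddCommGroup E] [Module K E] [FiniteDimensional K E]
  [AddCommGroup F] [Module K F]

theorem finrank_map_add_finrank_inf_ker (f : E →ₗ[K] F) (U : Submodule K E) :
    finrank K (U.map f) + finrank K ↥(U ⊓ LinearMap.ker f) = finrank K U := by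
  have h := LinearMap.finrank_range_add_finrank_ker (f.domRestrict U)
  rwa [LinearMap.range_domRestrict, LinearMap.ker_domRestrict, ← finrank_map_subtype_eq,
    map_comap_subtype] at h

variable {F₁ F₂ F₃ F₄ : Type*} [AddCommGroup F₁] [Module K F₁] [AddCommGroup F₂] [Module K F₂]
  [AddCommGroup F₃] [Module K F₃] [AddCommGroup F₄] [Module K F₄]

theorem finrank_map_sup_add_finrank_map_inf_le (U₁ U₂ : Submodule K E)
    {f₁ : E →ₗ[K] F₁} {f₂ : E →ₗ[K] F₂} {g : E →ₗ[K] F₃} {h : E →ₗ[K] F₄}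
    (hg : LinearMap.ker f₁ ⊔ LinearMap.ker f₂ ≤ LinearMap.ker g)
    (hh : LinearMap.ker f₁ ⊓ LinearMap.ker f₂ ≤ LinearMap.ker h) :
    finrank K ((U₁ ⊔ U₂).map g) + finrank K ((U₁ ⊓ U₂).map h) ≤
      finrank K (U₁.map f₁) + finrank K (U₂.map f₂) := by
  -- By rank–nullity it suffices to bound `dim (U₁ ⊓ ker f₁) + dim (U₂ ⊓ ker f₂)`, which is
  -- modularity of dimension for these two subspaces.
  have hsup : U₁ ⊓ LinearMap.ker f₁ ⊔ U₂ ⊓ LinearMap.ker f₂ ≤ (U₁ ⊔ U₂) ⊓ LinearMap.ker g :=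
    le_inf (sup_le_sup inf_le_left inf_le_left) ((sup_le_sup inf_le_right inf_le_right).trans hg)
  have hinf : U₁ ⊓ LinearMap.ker f₁ ⊓ (U₂ ⊓ LinearMap.ker f₂) ≤ (U₁ ⊓ U₂) ⊓ LinearMap.ker h :=
    le_inf (inf_le_inf inf_le_left inf_le_left) ((inf_le_inf inf_le_right inf_le_right).trans hh)
  have := finrank_mono hsup
  have := finrank_mono hinf
  have := finrank_sup_add_finrank_inf_eq (U₁ ⊓ LinearMap.ker f₁) (U₂ ⊓ LinearMap.ker f₂)
  have := finrank_sup_add_finrank_inf_eq U₁ U₂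
  have := finrank_map_add_finrank_inf_ker f₁ U₁
  have := finrank_map_add_finrank_inf_ker f₂ U₂
  have := finrank_map_add_finrank_inf_ker g (U₁ ⊔ U₂)
  have := finrank_map_add_finrank_inf_ker h (U₁ ⊓ U₂)
  omega
end

namespace Matrix
variable {K m n : Type*} [Field K]

theorem rank_submatrix_eq_finrank_map_span (M : Matrix m n K) (X : Finset m) (Y : Finset n) :
    (M.submatrix ((↑) : X → m) ((↑) : Y → n)).rank =
      finrank K ((span K (M.col '' Y)).map (LinearMap.funLeft K K ((↑) : X → m))) := by
  rw [rank_eq_finrank_span_cols, map_span, ← Set.image_comp, Set.image_eq_range]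
  rfl

theorem mem_ker_funLeft_coe {X : Finset m} {v : m → K} :
    v ∈ LinearMap.ker (LinearMap.funLeft K K ((↑) : X → m)) ↔ ∀ i ∈ X, v i = 0 := by
  simp [funext_iff]

theorem ker_funLeft_coe_le_of_subset {X X' : Finset m} (h : X' ⊆ X) :
    LinearMap.ker (LinearMap.funLeft K K ((↑) : X → m)) ≤
      LinearMap.ker (LinearMap.funLeft K K ((↑) : X' → m)) := by
  intro v hv
  rw [mem_ker_funLeft_coe] at hv ⊢
  exact fun i hi => hv i (h hi)

theorem ker_funLeft_coe_inf_le_union [DecidableEq m] (X₁ X₂ : Finset m) :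
    LinearMap.ker (LinearMap.funLeft K K ((↑) : X₁ → m)) ⊓
        LinearMap.ker (LinearMap.funLeft K K ((↑) : X₂ → m)) ≤
      LinearMap.ker (LinearMap.funLeft K K ((↑) : ↥(X₁ ∪ X₂) → m)) := by
  rintro v ⟨hv₁, hv₂⟩
  rw [SetLike.mem_coe, mem_ker_funLeft_coe] at hv₁ hv₂
  rw [mem_ker_funLeft_coe]
  intro i hi
  rcases Finset.mem_union.1 hi with hi | hi
  exacts [hv₁ i hi, hv₂ i hi]

theorem rank_submatrix_inter_union_add_le [DecidableEq m] [DecidableEq n] [Finite m]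
    (M : Matrix m n K) (X₁ X₂ : Finset m) (Y₁ Y₂ : Finset n) :
    (M.submatrix ((↑) : ↥(X₁ ∩ X₂) → m) ((↑) : ↥(Y₁ ∪ Y₂) → n)).rank +
        (M.submatrix ((↑) : ↥(X₁ ∪ X₂) → m) ((↑) : ↥(Y₁ ∩ Y₂) → n)).rank ≤
      (M.submatrix ((↑) : X₁ → m) ((↑) : Y₁ → n)).rank +
        (M.submatrix ((↑) : X₂ → m) ((↑) : Y₂ → n)).rank := by
  have hsup : span K (M.col '' ↑(Y₁ ∪ Y₂)) = span K (M.col '' Y₁) ⊔ span K (M.col '' Y₂) := by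
    rw [Finset.coe_union, Set.image_union, span_union]
  have hinf : span K (M.col '' ↑(Y₁ ∩ Y₂)) ≤ span K (M.col '' Y₁) ⊓ span K (M.col '' Y₂) :=
    le_inf (span_mono (Set.image_mono Finset.inter_subset_left))
      (span_mono (Set.image_mono Finset.inter_subset_right))
  simp only [rank_submatrix_eq_finrank_map_span]
  rw [hsup]
  refine le_trans (Nat.add_le_add_left (finrank_mono (map_mono hinf)) _) ?_
  exact finrank_map_sup_add_finrank_map_inf_le _ _
    (sup_le (ker_funLeft_coe_le_of_subset Finset.inter_subset_left)
      (ker_funLeft_coe_le_of_subset Finset.inter_subset_right))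
    (ker_funLeft_coe_inf_le_union X₁ X₂)

end Matrix

theorem cutRankOn_inter_union_add_le (G : SimpleGraph V) (X₁ X₂ Y₁ Y₂ : Finset V) :
    cutRankOn G (X₁ ∩ X₂) (Y₁ ∪ Y₂) + cutRankOn G (X₁ ∪ X₂) (Y₁ ∩ Y₂) ≤
      cutRankOn G X₁ Y₁ + cutRankOn G X₂ Y₂ :=
  (G.adjMatrix (ZMod 2)).rank_submatrix_inter_union_add_le X₁ X₂ Y₁ Y₂

theorem cutRank_del_del_mixed_general {G : SimpleGraph V} {a b : V} {A B : Finset V}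
    (hbA : b ∈ A) (haB : a ∉ B) :
    cutRank G (Finset.univ \ {b}) (A ∩ B) + cutRank G (Finset.univ \ {a}) (A ∪ B) ≤
      cutRank G (Finset.univ \ {a}) A + cutRank G (Finset.univ \ {b}) B := by
  have hinter : (univ \ {b}) \ (A ∩ B) = ((univ \ {a}) \ A) ∪ ((univ \ {b}) \ B) := by
    ext x
    simp only [mem_sdiff, mem_union, mem_inter, mem_univ, mem_singleton, true_and]
    grind
  have hunion : (univ \ {a}) \ (A ∪ B) = ((univ \ {a}) \ A) ∩ ((univ \ {b}) \ B) := by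
    ext x
    simp only [mem_sdiff, mem_union, mem_inter, mem_univ, mem_singleton, true_and]
    grind
  unfold cutRank
  rw [hinter, hunion]
  exact cutRankOn_inter_union_add_le G A B _ _

theorem cutRank_del_del_mixed {G : SimpleGraph V} {a b : V} (hab : a ≠ b)
    {A B : Finset V} (hA : A ⊆ Finset.univ \ {a}) (hB : B ⊆ Finset.univ \ {b})
    (hbA : b ∈ A) (haB : a ∉ B) :
    cutRank G (Finset.univ \ {b}) (A ∩ B) + cutRank G (Finset.univ \ {a}) (A ∪ B) ≤
      cutRank G (Finset.univ \ {a}) A + cutRank G (Finset.univ \ {b}) B :=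
  cutRank_del_del_mixed_general hbA haB
end

section
/- Let G be a graph, x a vertex of G, and X, Y ⊆ V(G)−{x}. Then ρ_{G∖x}(X∩Y) + ρ_G(X∪Y∪{x}) ≤ ρ_{G∖x}(X) + ρ_G(Y∪{x}). -/
open Finset

variable {V : Type} [Fintype V] [DecidableEq V]

open scoped Classical

/-
Submatrix rank is submodular:
rank M[R₁ ∩ R₂, C₁ ∪ C₂] + rank M[R₁ ∪ R₂, C₁ ∩ C₂] ≤ rank M[R₁, C₁] + rank M[R₂, C₂].
Indeed rank M[R, C] = dim (W_R + K_C) - dim K_C, where W_R is the span of the rows indexed by R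
and K_C the space of vectors vanishing on C; since K_{C₁ ∪ C₂} = K_{C₁} ∩ K_{C₂} and
K_{C₁ ∩ C₂} = K_{C₁} + K_{C₂}, the inequality is the modular law
dim (A ∩ B) + dim (A + B) = dim A + dim B for A = W_{R₁} + K_{C₁}, B = W_{R₂} + K_{C₂} and for
K_{C₁}, K_{C₂}. The theorem is the case R₁ = X, R₂ = Y ∪ {x}, C₁ = V ∖ (X ∪ {x}),
C₂ = V ∖ (Y ∪ {x}) for the adjacency matrix, where x ∉ X gives X ∩ (Y ∪ {x}) = X ∩ Y.
-/

open Module Submodule LinearMap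

section FinrankMap

variable {K E F G : Type*} [DivisionRing K] [AddCommGroup E] [Module K E] [FiniteDimensional K E]
  [AddCommGroup F] [Module K F] [AddCommGroup G] [Module K G]

theorem finrank_map_add_finrank_ker (f : E →ₗ[K] F) (p : Submodule K E) :
    finrank K (p.map f) + finrank K (ker f) = finrank K ↥(p ⊔ ker f) := by
  set q := p ⊔ ker f
  have hrange : range (f ∘ₗ q.subtype) = p.map f := by
    rw [range_comp, range_subtype, Submodule.map_sup, sup_eq_left]
    exact (map_comap_le f ⊥).trans bot_le
  have hker : finrank K (ker (f ∘ₗ q.subtype)) = finrank K (ker f) := by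
    rw [ker_comp]
    exact (comapSubtypeEquivOfLe le_sup_right).finrank_eq
  rw [← hrange, ← hker]
  exact finrank_range_add_finrank_ker _

/-- The rank of `p` modulo `k` only drops when `k` is enlarged to `ker f`. -/
theorem finrank_map_add_finrank_le {f : E →ₗ[K] F} {k : Submodule K E} (hk : k ≤ ker f)
    (p : Submodule K E) : finrank K (p.map f) + finrank K k ≤ finrank K ↥(p ⊔ k) := by
  have hsup : p ⊔ k ⊔ ker f = p ⊔ ker f := by rw [sup_assoc, sup_eq_right.2 hk]
  have hinf : finrank K k ≤ finrank K ↥((p ⊔ k) ⊓ ker f) :=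
    finrank_mono (le_inf le_sup_right hk)
  have := finrank_sup_add_finrank_inf_eq (p ⊔ k) (ker f)
  rw [hsup] at this
  linarith [finrank_map_add_finrank_ker f p]

theorem finrank_map_add_finrank_map_le {F₁ F₂ : Type*} [AddCommGroup F₁] [Module K F₁]
    [AddCommGroup F₂] [Module K F₂] {f₁ : E →ₗ[K] F₁} {f₂ : E →ₗ[K] F₂} {g : E →ₗ[K] F}
    {h : E →ₗ[K] G} (hg : ker f₁ ⊓ ker f₂ ≤ ker g) (hh : ker f₁ ⊔ ker f₂ ≤ ker h)
    {p₁ p₂ q r : Submodule K E} (hq : q ≤ p₁ ⊓ p₂) (hr : r ≤ p₁ ⊔ p₂) :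
    finrank K (q.map g) + finrank K (r.map h) ≤ finrank K (p₁.map f₁) + finrank K (p₂.map f₂) := by
  set k₁ := ker f₁
  set k₂ := ker f₂
  have hq' : finrank K ↥(q ⊔ k₁ ⊓ k₂) ≤ finrank K ↥((p₁ ⊔ k₁) ⊓ (p₂ ⊔ k₂)) :=
    finrank_mono <| sup_le (hq.trans (inf_le_inf le_sup_left le_sup_left))
      (inf_le_inf le_sup_right le_sup_right)
  have hr' : finrank K ↥(r ⊔ (k₁ ⊔ k₂)) ≤ finrank K ↥((p₁ ⊔ k₁) ⊔ (p₂ ⊔ k₂)) :=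
    finrank_mono <| by rw [sup_sup_sup_comm]; exact sup_le_sup_right hr _
  linarith [finrank_map_add_finrank_le hg q, finrank_map_add_finrank_le hh r,
    finrank_map_add_finrank_ker f₁ p₁, finrank_map_add_finrank_ker f₂ p₂,
    finrank_sup_add_finrank_inf_eq k₁ k₂, finrank_sup_add_finrank_inf_eq (p₁ ⊔ k₁) (p₂ ⊔ k₂)]

end FinrankMap

namespace LinearMap

variable {K κ : Type*} [Field K]

theorem mem_ker_funLeft_val {C : Finset κ} {v : κ → K} :
    v ∈ ker (funLeft K K ((↑) : C → κ)) ↔ ∀ j ∈ C, v j = 0 := by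
  simp [funext_iff]

theorem ker_funLeft_val_le_of_subset {C D : Finset κ} (h : C ⊆ D) :
    ker (funLeft K K ((↑) : D → κ)) ≤ ker (funLeft K K ((↑) : C → κ)) := fun _ hv =>
  mem_ker_funLeft_val.2 fun j hj => mem_ker_funLeft_val.1 hv j (h hj)

theorem ker_funLeft_val_inf_le_union [DecidableEq κ] (C₁ C₂ : Finset κ) :
    ker (funLeft K K ((↑) : C₁ → κ)) ⊓ ker (funLeft K K ((↑) : C₂ → κ)) ≤
      ker (funLeft K K ((↑) : ↥(C₁ ∪ C₂) → κ)) := fun _ ⟨hv₁, hv₂⟩ =>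
  mem_ker_funLeft_val.2 fun j hj => (Finset.mem_union.1 hj).elim
    (mem_ker_funLeft_val.1 hv₁ j) (mem_ker_funLeft_val.1 hv₂ j)

end LinearMap

namespace Matrix

variable {K ι κ : Type*} [Field K]

theorem rank_submatrix_val_eq_finrank_map (M : Matrix ι κ K) (R : Finset ι) (C : Finset κ) :
    (M.submatrix ((↑) : R → ι) ((↑) : C → κ)).rank =
      finrank K ((span K (M.row '' R)).map (funLeft K K ((↑) : C → κ))) := by
  have hrows : Set.range (M.submatrix ((↑) : R → ι) ((↑) : C → κ)).row =
      funLeft K K ((↑) : C → κ) '' (M.row '' R) := by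
    rw [← Subtype.range_coe (s := (R : Set ι)), ← Set.range_comp, ← Set.range_comp]
    rfl
  rw [rank_eq_finrank_span_row, hrows, Submodule.map_span]

theorem rank_submatrix_submodular [DecidableEq ι] [DecidableEq κ] [Finite κ] (M : Matrix ι κ K)
    (R₁ R₂ : Finset ι) (C₁ C₂ : Finset κ) :
    (M.submatrix ((↑) : ↥(R₁ ∩ R₂) → ι) ((↑) : ↥(C₁ ∪ C₂) → κ)).rank +
        (M.submatrix ((↑) : ↥(R₁ ∪ R₂) → ι) ((↑) : ↥(C₁ ∩ C₂) → κ)).rank ≤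
      (M.submatrix ((↑) : R₁ → ι) ((↑) : C₁ → κ)).rank +
        (M.submatrix ((↑) : R₂ → ι) ((↑) : C₂ → κ)).rank := by
  simp only [rank_submatrix_val_eq_finrank_map]
  refine finrank_map_add_finrank_map_le ?_ ?_ ?_ ?_
  · exact ker_funLeft_val_inf_le_union C₁ C₂
  · exact sup_le (ker_funLeft_val_le_of_subset Finset.inter_subset_left)
      (ker_funLeft_val_le_of_subset Finset.inter_subset_right)
  · exact le_inf (span_mono (Set.image_mono (by simp))) (span_mono (Set.image_mono (by simp)))
  · rw [← span_union, ← Set.image_union, Finset.coe_union]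

end Matrix

theorem cutRankOn_submodular (G : SimpleGraph V) (R₁ R₂ C₁ C₂ : Finset V) :
    cutRankOn G (R₁ ∩ R₂) (C₁ ∪ C₂) + cutRankOn G (R₁ ∪ R₂) (C₁ ∩ C₂) ≤
      cutRankOn G R₁ C₁ + cutRankOn G R₂ C₂ :=
  (G.adjMatrix (ZMod 2)).rank_submatrix_submodular R₁ R₂ C₁ C₂

theorem cutRank_del_submod_insert_general {G : SimpleGraph V} {x : V}
    {X Y : Finset V} (hX : X ⊆ Finset.univ \ {x}) :
    cutRank G (Finset.univ \ {x}) (X ∩ Y) + cutRank G Finset.univ (X ∪ Y ∪ {x}) ≤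
      cutRank G (Finset.univ \ {x}) X + cutRank G Finset.univ (Y ∪ {x}) := by
  have hxX : x ∉ X := fun h => by simpa using hX h
  have h := cutRankOn_submodular G X (Y ∪ {x}) ((univ \ {x}) \ X) (univ \ (Y ∪ {x}))
  unfold cutRank
  convert h using 3
  · grind
  · ext a; simp only [mem_sdiff, mem_inter, mem_union, mem_univ, mem_singleton]; tauto
  · rw [union_assoc]
  · ext a; simp only [mem_sdiff, mem_inter, mem_union, mem_univ, mem_singleton]; tauto

theorem cutRank_del_submod_insert {G : SimpleGraph V} {x : V}
    {X Y : Finset V} (hX : X ⊆ Finset.univ \ {x}) (hY : Y ⊆ Finset.univ \ {x}) :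
    cutRank G (Finset.univ \ {x}) (X ∩ Y) + cutRank G Finset.univ (X ∪ Y ∪ {x}) ≤
      cutRank G (Finset.univ \ {x}) X + cutRank G Finset.univ (Y ∪ {x}) :=
  cutRank_del_submod_insert_general hX
end

section
/- If two graphs G and H are pivot-equivalent, then ρ_G(X) = ρ_H(X) for every set X of vertices. -/
open Finset

variable {V : Type} [Fintype V] [DecidableEq V]

open scoped Classical

/-!
The cut-rank `ρ_G(X)` is the rank over `GF(2)` of the block `M = A[X, V ∖ X]` of the adjacency
matrix `A`, so it suffices to show that one pivot `G ∧ vw` changes `M` only by invertible row and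
column operations. Writing `a = A v` and `b = A w`, pivoting swaps the rows (and columns) of `v`
and `w` and adds `a x * b y + b x * a y` to every other entry `(x, y)`.
If `v` and `w` both lie in `X`, the rows of the new block are the rows `b`, `a` and
`A x + a x • b + b x • a` of the old one, so both blocks have the same row space; the case where
both lie outside `X` follows by transposing. If `v ∈ X` and `w ∉ X`, then `A v w = 1`, and the
new block is obtained from `M` by adding `a x + b x` times row `v` to row `x` and `a y + b y`
times column `w` to column `y`.
-/

section PivotAdjacency

variable {G : SimpleGraph V} {v w x y : V}

omit [Fintype V] [DecidableEq V] in
lemma pivotToggle_comm : PivotToggle G w v x y ↔ PivotToggle G v w x y := by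
  have hC : SideC G w v = SideC G v w := funext fun _ => propext and_comm
  simp only [PivotToggle, show SideA G w v = SideB G v w from rfl,
    show SideB G w v = SideA G v w from rfl, hC]
  tauto

lemma pivot_adj : (pivot G v w).Adj x y ↔ x ≠ y ∧
    Xor (G.Adj (Equiv.swap v w x) (Equiv.swap v w y))
      (PivotToggle G v w (Equiv.swap v w x) (Equiv.swap v w y)) := Iff.rfl

lemma pivot_comm : pivot G v w = pivot G w v := by
  ext x y
  rw [pivot_adj, pivot_adj, Equiv.swap_comm, pivotToggle_comm]

lemma pivot_adj_of_adj (h : G.Adj v w) : (pivot G v w).Adj v w := by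
  rw [pivot_adj, Equiv.swap_apply_left, Equiv.swap_apply_right]
  simp [PivotToggle, SideA, SideB, SideC, h.ne, h.symm]

lemma pivot_adjMatrix_apply_left_of_ne {α : Type*} [Zero α] [One α] (hyv : y ≠ v)
    (hyw : y ≠ w) : (pivot G v w).adjMatrix α v y = G.adjMatrix α w y := by
  have : (pivot G v w).Adj v y ↔ G.Adj w y := by
    rw [pivot_adj, Equiv.swap_apply_left, Equiv.swap_apply_of_ne_of_ne hyv hyw]
    simp [Xor, PivotToggle, SideA, SideB, SideC, hyv.symm]
  simp only [SimpleGraph.adjMatrix_apply, this]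

lemma pivot_adjMatrix_apply_right_of_ne {α : Type*} [Zero α] [One α] (hyv : y ≠ v)
    (hyw : y ≠ w) : (pivot G v w).adjMatrix α w y = G.adjMatrix α v y := by
  rw [pivot_comm, pivot_adjMatrix_apply_left_of_ne hyw hyv]

lemma pivot_adjMatrix_apply_of_ne (hxv : x ≠ v) (hxw : x ≠ w) (hyv : y ≠ v) (hyw : y ≠ w) :
    (pivot G v w).adjMatrix (ZMod 2) x y = G.adjMatrix (ZMod 2) x y
      + G.adjMatrix (ZMod 2) v x * G.adjMatrix (ZMod 2) w y
      + G.adjMatrix (ZMod 2) w x * G.adjMatrix (ZMod 2) v y := by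
  obtain rfl | hxy := eq_or_ne x y
  · simp only [SimpleGraph.adjMatrix_apply, SimpleGraph.irrefl, if_false]
    ring_nf
    reduce_mod_char
  simp only [SimpleGraph.adjMatrix_apply, pivot_adj, Equiv.swap_apply_of_ne_of_ne hxv hxw,
    Equiv.swap_apply_of_ne_of_ne hyv hyw]
  -- `x` and `y` lie on different sides exactly when `a x * b y + b x * a y = 1`
  by_cases G.Adj x y <;> by_cases G.Adj v x <;> by_cases G.Adj w x <;>
    by_cases G.Adj v y <;> by_cases G.Adj w y <;>
    simp_all [PivotToggle, SideA, SideB, SideC] <;> decide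

end PivotAdjacency

namespace Matrix

theorem rank_le_of_row_mem_span {K m m' n : Type*} [Field K] [Finite m] [Finite m'] [Fintype n]
    {A : Matrix m n K} {B : Matrix m' n K}
    (h : ∀ i, B.row i ∈ Submodule.span K (Set.range A.row)) : B.rank ≤ A.rank := by
  rw [rank_eq_finrank_span_row, rank_eq_finrank_span_row]
  exact Submodule.finrank_mono (Submodule.span_le.mpr (Set.range_subset_iff.mpr h))

theorem rank_eq_of_row_eq_swap_add {K m n : Type*} [Field K] [Finite m] [Fintype n]
    {M N : Matrix m n K} {r s : m} {a b : m → K} (hr : N.row r = M.row s) (hs : N.row s = M.row r)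
    (h : ∀ i, i ≠ r → i ≠ s → N.row i = M.row i + a i • M.row s + b i • M.row r) :
    N.rank = M.rank := by
  have mem (A : Matrix m n K) (i : m) : A.row i ∈ Submodule.span K (Set.range A.row) :=
    Submodule.subset_span ⟨i, rfl⟩
  apply le_antisymm <;> apply rank_le_of_row_mem_span <;> intro i
  · by_cases hir : i = r
    · rw [hir, hr]; exact mem M s
    by_cases his : i = s
    · rw [his, hs]; exact mem M r
    rw [h i hir his]
    exact add_mem (add_mem (mem M i) (Submodule.smul_mem _ _ (mem M s)))
      (Submodule.smul_mem _ _ (mem M r))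
  · by_cases hir : i = r
    · rw [hir, ← hs]; exact mem N s
    by_cases his : i = s
    · rw [his, ← hr]; exact mem N r
    rw [show M.row i = N.row i - a i • N.row r - b i • N.row s by rw [h i hir his, hr, hs]; abel]
    exact sub_mem (sub_mem (mem N i) (Submodule.smul_mem _ _ (mem N r)))
      (Submodule.smul_mem _ _ (mem N s))

theorem isUnit_one_add_vecMulVec {R n : Type*} [Ring R] [Fintype n] [DecidableEq n]
    {u v : n → R} (h : v ⬝ᵥ u = 0) : IsUnit (1 + vecMulVec u v) :=
  IsNilpotent.isUnit_one_add
    ⟨2, by rw [pow_two, vecMulVec_mul_vecMulVec, h, zero_smul, vecMulVec_zero]⟩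

/-- `N` arises from `M` by adding `p i` times row `r` to each row `i`, and then `q j` times
column `c` to each column `j`. -/
theorem rank_eq_of_apply_eq_add_row_add_col {R m n : Type*} [CommRing R] [Fintype m]
    [DecidableEq m] [Fintype n] [DecidableEq n] {M N : Matrix m n R} {r : m} {c : n}
    {p : m → R} {q : n → R} (hp : p r = 0) (hq : q c = 0)
    (h : ∀ i j, N i j = M i j + p i * M r j + (M i c + p i * M r c) * q j) :
    N.rank = M.rank := by
  let P := 1 + vecMulVec p (Pi.single r 1)
  let Q := 1 + vecMulVec (Pi.single c 1) q
  have hP : IsUnit P.det :=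
    (P.isUnit_iff_isUnit_det).mp (isUnit_one_add_vecMulVec (by simp [hp]))
  have hQ : IsUnit Q.det :=
    (Q.isUnit_iff_isUnit_det).mp (isUnit_one_add_vecMulVec (by simp [hq]))
  have hN : N = P * M * Q := by
    ext i j
    simp [h, P, Q, Matrix.add_mul, Matrix.mul_add, vecMulVec_mul, mul_vecMulVec, vecMulVec_apply]
  rw [hN, rank_mul_eq_left_of_isUnit_det _ _ hQ, rank_mul_eq_right_of_isUnit_det _ _ hP]

end Matrix

omit [Fintype V] [DecidableEq V] in
lemma cutRankOn_eq_rank (G : SimpleGraph V) (X Y : Finset V) :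
    cutRankOn G X Y = ((G.adjMatrix (ZMod 2)).submatrix ((↑) : X → V) ((↑) : Y → V)).rank :=
  rfl

omit [Fintype V] [DecidableEq V] in
lemma cutRankOn_comm (G : SimpleGraph V) (X Y : Finset V) :
    cutRankOn G X Y = cutRankOn G Y X := by
  rw [cutRankOn_eq_rank, cutRankOn_eq_rank, ← Matrix.rank_transpose, Matrix.transpose_submatrix,
    SimpleGraph.transpose_adjMatrix]

section PivotCutRank

variable {G : SimpleGraph V} {v w : V} {X Y : Finset V}

lemma cutRankOn_pivot_of_mem_left (hvX : v ∈ X) (hwX : w ∈ X) (hvY : v ∉ Y) (hwY : w ∉ Y) :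
    cutRankOn (pivot G v w) X Y = cutRankOn G X Y := by
  rw [cutRankOn_eq_rank, cutRankOn_eq_rank]
  have hYv (j : Y) : (j : V) ≠ v := fun h => hvY (h ▸ j.2)
  have hYw (j : Y) : (j : V) ≠ w := fun h => hwY (h ▸ j.2)
  refine Matrix.rank_eq_of_row_eq_swap_add (r := ⟨v, hvX⟩) (s := ⟨w, hwX⟩)
    (a := fun i => G.adjMatrix (ZMod 2) v i) (b := fun i => G.adjMatrix (ZMod 2) w i)
    ?_ ?_ fun i hiv hiw => ?_ <;> ext j
  · exact pivot_adjMatrix_apply_left_of_ne (hYv j) (hYw j)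
  · exact pivot_adjMatrix_apply_right_of_ne (hYv j) (hYw j)
  · exact pivot_adjMatrix_apply_of_ne (fun h => hiv (Subtype.ext h))
      (fun h => hiw (Subtype.ext h)) (hYv j) (hYw j)

lemma cutRankOn_pivot_of_mem_left_of_mem_right (hvw : G.Adj v w) (hvX : v ∈ X) (hwY : w ∈ Y)
    (hvY : v ∉ Y) (hwX : w ∉ X) : cutRankOn (pivot G v w) X Y = cutRankOn G X Y := by
  rw [cutRankOn_eq_rank, cutRankOn_eq_rank]
  set A := G.adjMatrix (ZMod 2)
  have hXw (i : X) : (i : V) ≠ w := fun h => hwX (h ▸ i.2)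
  have hYv (j : Y) : (j : V) ≠ v := fun h => hvY (h ▸ j.2)
  have hA_vw : A v w = 1 := by simp [A, SimpleGraph.adjMatrix_apply, hvw]
  have hA_symm (x y : V) : A x y = A y x := (G.isSymm_adjMatrix.apply x y).symm
  have two_eq_zero : (2 : ZMod 2) = 0 := rfl
  refine Matrix.rank_eq_of_apply_eq_add_row_add_col (r := ⟨v, hvX⟩) (c := ⟨w, hwY⟩)
    (p := fun i => if (i : V) = v then 0 else A v i + A w i)
    (q := fun j => if (j : V) = w then 0 else A v j + A w j) (by simp) (by simp) fun i j => ?_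
  simp only [Matrix.submatrix_apply]
  by_cases hiv : (i : V) = v <;> by_cases hjw : (j : V) = w
  · simp [hiv, hjw, SimpleGraph.adjMatrix_apply, pivot_adj_of_adj hvw, hA_vw]
  · simp only [hiv, hjw, if_true, if_false, zero_mul, add_zero, hA_vw, one_mul,
      pivot_adjMatrix_apply_left_of_ne (hYv j) hjw]
    linear_combination (-A v j) * two_eq_zero
  · simp only [hiv, hjw, if_true, if_false, mul_zero, add_zero, hA_vw, mul_one, hA_symm i w,
      (pivot G v w).isSymm_adjMatrix.apply w i, pivot_adjMatrix_apply_right_of_ne hiv (hXw i)]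
    linear_combination (-A w i) * two_eq_zero
  · simp only [hiv, hjw, if_false, hA_vw, mul_one, hA_symm i w,
      pivot_adjMatrix_apply_of_ne hiv (hXw i) (hYv j) hjw]
    linear_combination (-(A v i * A v j + A w i * A v j + A w i * A w j)) * two_eq_zero

lemma cutRank_univ_pivot (hvw : G.Adj v w) (X : Finset V) :
    cutRank (pivot G v w) Finset.univ X = cutRank G Finset.univ X := by
  unfold cutRank
  by_cases hv : v ∈ X <;> by_cases hw : w ∈ X
  · exact cutRankOn_pivot_of_mem_left hv hw (by simp [hv]) (by simp [hw])
  · exact cutRankOn_pivot_of_mem_left_of_mem_right hvw hv (by simpa) (by simp [hv]) hw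
  · rw [pivot_comm]
    exact cutRankOn_pivot_of_mem_left_of_mem_right hvw.symm hw (by simpa) (by simp [hw]) hv
  · rw [cutRankOn_comm, cutRankOn_comm G]
    exact cutRankOn_pivot_of_mem_left (by simpa) (by simpa) hv hw

end PivotCutRank

theorem cutRank_pivotEquiv {G H : SimpleGraph V} (h : PivotEquiv G H)
    (X : Finset V) : cutRank G Finset.univ X = cutRank H Finset.univ X := by
  induction h with
  | refl => rfl
  | tail _ hstep ih =>
    obtain ⟨v, w, hvw, rfl⟩ := hstep
    rw [ih, cutRank_univ_pivot hvw]
end
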